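/- Let V be a complex Hilbert space, B a bounded, modulus-coercive sesquilinear form on V with bound C_B and coercivity constant α, π : V → V a continuous linear projection with range V_H and kernel W, K : V_H → W the ideal corrector, and F a continuous antilinear functional on V. Let u ∈ V solve B(u, v) = F(v) for all v ∈ V and let G(F) ∈ W be the Green's corrector. Let K_m : V_H → W be a continuous linear map and ε ≥ 0 be such that ‖K(v_H) − K_m(v_H)‖ ≤ ε‖v_H‖ for all v_H ∈ V_H. Then there exists a unique u_{H,m} ∈ V_H solving B((I + K_m)(u_{H,m}), (I + K_m)(v)) = F((I + K_m)(v)) for all v ∈ V_H, and it satisfies ‖u − (I + K_m)(u_{H,m})‖ ≤ (C_B/α)(‖G(F)‖ + ε‖π u‖). -/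

import Mathlib

/-!
The localized problem is `B` restricted to the trial space `(I + K_m) V_H`. There `π` inverts
`I + K_m`, so `B` stays coercive on it and a complex Lax–Milgram theorem gives a unique
solution `u_{H,m}`. The remainder `u - (π u + K (π u) + G(F))` lies in `W` and is
`B`-orthogonal to `W`, hence vanishes; so `u - (I + K_m)(π u) = G(F) + (K - K_m)(π u)`.
Galerkin orthogonality and Céa's lemma bound the error by `C_B / α` times this defect.
-/

open InnerProductSpace

section Hilbert

variable {𝕜 E : Type*} [RCLike 𝕜] [NormedAddCommGroup E] [InnerProductSpace 𝕜 E]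

local notation "⟪" x ", " y "⟫" => @inner 𝕜 _ _ x y

theorem ContinuousLinearMap.mul_norm_le_norm_apply_of_coercive {A : E →L[𝕜] E} {α : ℝ}
    (hA : ∀ v, α * ‖v‖ ^ 2 ≤ ‖⟪v, A v⟫‖) (v : E) : α * ‖v‖ ≤ ‖A v‖ := by
  rcases (norm_nonneg v).eq_or_lt with hv | hv
  · rw [← hv, mul_zero]
    exact norm_nonneg _
  refine le_of_mul_le_mul_right ?_ hv
  calc α * ‖v‖ * ‖v‖ = α * ‖v‖ ^ 2 := by ring
    _ ≤ ‖⟪v, A v⟫‖ := hA v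
    _ ≤ ‖v‖ * ‖A v‖ := norm_inner_le_norm _ _
    _ = ‖A v‖ * ‖v‖ := mul_comm _ _

variable [CompleteSpace E]

theorem ContinuousLinearMap.bijective_of_coercive {A : E →L[𝕜] E} {α : ℝ} (hα : 0 < α)
    (hA : ∀ v, α * ‖v‖ ^ 2 ≤ ‖⟪v, A v⟫‖) : Function.Bijective A := by
  have hanti : AntilipschitzWith (Real.toNNReal α⁻¹) A :=
    A.antilipschitz_of_bound fun v => by
      rw [Real.coe_toNNReal _ (inv_nonneg.mpr hα.le), inv_mul_eq_div, le_div_iff₀ hα, mul_comm]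
      exact A.mul_norm_le_norm_apply_of_coercive hA v
  refine ⟨hanti.injective, LinearMap.range_eq_top.mp ?_⟩
  have hclosed : IsClosed (A.range : Set E) := by
    simpa only [LinearMap.coe_range, ContinuousLinearMap.coe_coe] using
      hanti.isClosed_range A.uniformContinuous
  have : CompleteSpace A.range := hclosed.completeSpace_coe
  rw [← Submodule.orthogonal_eq_bot_iff, Submodule.eq_bot_iff]
  intro w hw
  have hAw : ⟪w, A w⟫ = 0 :=
    Submodule.inner_left_of_mem_orthogonal (LinearMap.mem_range_self (A : E →ₗ[𝕜] E) w) hw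
  have : α * ‖w‖ ^ 2 ≤ 0 := by simpa [hAw] using hA w
  simpa using nonpos_of_mul_nonpos_right this hα

theorem exists_apply_eq_inner_of_antilinear (F : E →L⋆[𝕜] 𝕜) : ∃ f : E, ∀ v, F v = ⟪v, f⟫ := by
  refine ⟨(toDual 𝕜 E).symm ((starL 𝕜 : 𝕜 ≃L⋆[𝕜] 𝕜).toContinuousLinearMap.comp F), fun v => ?_⟩
  rw [← inner_conj_symm, toDual_symm_apply]
  simp

theorem ContinuousLinearMap.existsUnique_apply_eq_of_coercive (B : E →L[𝕜] E →L⋆[𝕜] 𝕜)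
    {α : ℝ} (hα : 0 < α) (hB : ∀ v, α * ‖v‖ ^ 2 ≤ ‖B v v‖) (F : E →L⋆[𝕜] 𝕜) :
    ∃! u, B u = F := by
  set A := adjoint (continuousLinearMapOfBilin B.flip)
  have hBA : ∀ u v, B u v = ⟪v, A u⟫ := fun u v => by
    rw [adjoint_inner_right, continuousLinearMapOfBilin_apply, flip_apply]
  obtain ⟨f, hf⟩ := exists_apply_eq_inner_of_antilinear F
  have hA : Function.Bijective A := A.bijective_of_coercive hα fun v => hBA v v ▸ hB v
  have hiff : ∀ u, B u = F ↔ A u = f := fun u => by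
    simp only [ContinuousLinearMap.ext_iff, hBA, hf]
    exact ⟨ext_inner_left 𝕜, fun h v => by rw [h]⟩
  simpa only [hiff] using hA.existsUnique f

end Hilbert

section LocalizedMethod

variable {𝕜 E F : Type*} [RCLike 𝕜] [NormedAddCommGroup E] [NormedSpace 𝕜 E]
  [NormedAddCommGroup F] [NormedSpace 𝕜 F]

theorem ContinuousLinearMap.coercive_bilinearComp (B : E →L[𝕜] E →L⋆[𝕜] 𝕜) (T : F →L[𝕜] E)
    {α K : ℝ} (hα : 0 ≤ α) (hB : ∀ v, α * ‖v‖ ^ 2 ≤ ‖B v v‖) (hT : ∀ x, ‖x‖ ≤ K * ‖T x‖)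
    (x : F) : α / K ^ 2 * ‖x‖ ^ 2 ≤ ‖B.bilinearComp T T x x‖ :=
  calc α / K ^ 2 * ‖x‖ ^ 2 ≤ α / K ^ 2 * (K * ‖T x‖) ^ 2 := by gcongr; exact hT x
    _ ≤ α * ‖T x‖ ^ 2 := by
      rcases eq_or_ne K 0 with rfl | hK
      · rw [zero_pow two_ne_zero, div_zero, zero_mul]
        positivity
      · rw [mul_pow, ← mul_assoc, div_mul_cancel₀ _ (pow_ne_zero 2 hK)]
    _ ≤ ‖B.bilinearComp T T x x‖ := hB (T x)

theorem norm_le_div_mul_norm_of_apply_sub_eq_zero (B : E →L[𝕜] E →L⋆[𝕜] 𝕜) {C α : ℝ}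
    (hC : 0 ≤ C) (hα : 0 < α) (hbound : ∀ u v, ‖B u v‖ ≤ C * ‖u‖ * ‖v‖)
    (hB : ∀ v, α * ‖v‖ ^ 2 ≤ ‖B v v‖) {e d : E} (hed : B e (e - d) = 0) :
    ‖e‖ ≤ C / α * ‖d‖ := by
  rw [div_mul_eq_mul_div, le_div_iff₀ hα]
  rcases (norm_nonneg e).eq_or_lt with he | he
  · rw [← he, zero_mul]
    positivity
  refine le_of_mul_le_mul_right ?_ he
  calc ‖e‖ * α * ‖e‖ = α * ‖e‖ ^ 2 := by ring
    _ ≤ ‖B e e‖ := hB e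
    _ = ‖B e d‖ := by rw [map_sub, sub_eq_zero] at hed; rw [hed]
    _ ≤ C * ‖e‖ * ‖d‖ := hbound e d
    _ = C * ‖d‖ * ‖e‖ := by ring

def IsLocalizedSolution (B : E →L[𝕜] E →L⋆[𝕜] 𝕜) (π Km : E →L[𝕜] E) (F : E →L⋆[𝕜] 𝕜)
    (uHm : E) : Prop :=
  uHm ∈ Set.range π ∧ ∀ v ∈ Set.range π, B (uHm + Km uHm) (v + Km v) = F (v + Km v)

theorem IsLocalizedSolution.norm_sub_le {B : E →L[𝕜] E →L⋆[𝕜] 𝕜} {C α : ℝ} (hC : 0 ≤ C)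
    (hα : 0 < α) (hbound : ∀ u v, ‖B u v‖ ≤ C * ‖u‖ * ‖v‖) (hB : ∀ v, α * ‖v‖ ^ 2 ≤ ‖B v v‖)
    {π Km : E →L[𝕜] E} {F : E →L⋆[𝕜] 𝕜} {u : E} (hu : ∀ v, B u v = F v) {uHm : E}
    (huHm : IsLocalizedSolution B π Km F uHm) {vH : E} (hvH : vH ∈ Set.range π) :
    ‖u - (uHm + Km uHm)‖ ≤ C / α * ‖u - (vH + Km vH)‖ := by
  obtain ⟨⟨w, rfl⟩, hsol⟩ := huHm
  obtain ⟨w', rfl⟩ := hvH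
  refine norm_le_div_mul_norm_of_apply_sub_eq_zero B hC hα hbound hB ?_
  have hdiff : u - (π w + Km (π w)) - (u - (π w' + Km (π w'))) =
      π (w' - w) + Km (π (w' - w)) := by
    simp only [map_sub]
    abel
  rw [hdiff, map_sub, sub_apply, hu, hsol _ ⟨w' - w, rfl⟩, sub_self]

theorem eq_add_corrector_add_green (B : E →L[𝕜] E →L⋆[𝕜] 𝕜) {α : ℝ} (hα : 0 < α)
    (hB : ∀ v, α * ‖v‖ ^ 2 ≤ ‖B v v‖) {π : E →L[𝕜] E} (hπ : IsIdempotentElem π)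
    {K : E → E} (hK₀ : ∀ vH ∈ Set.range π, π (K vH) = 0)
    (hK : ∀ vH ∈ Set.range π, ∀ w : E, π w = 0 → B (K vH) w = -(B vH w))
    {F : E →L⋆[𝕜] 𝕜} {u : E} (hu : ∀ v, B u v = F v)
    {gF : E} (hgF₀ : π gF = 0) (hgF : ∀ w, π w = 0 → B gF w = F w) :
    u = π u + K (π u) + gF := by
  set r := u - (π u + K (π u) + gF)
  have hr₀ : π r = 0 := by
    have hπu : π (π u) = π u := congr($hπ u)
    simp only [r, map_sub, map_add, hK₀ _ ⟨u, rfl⟩, hgF₀, hπu]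
    abel
  have hrW : ∀ w, π w = 0 → B r w = 0 := fun w hw => by
    simp only [r, map_sub, map_add, sub_apply, add_apply, hu, hK _ ⟨u, rfl⟩ w hw, hgF w hw]
    ring
  have : α * ‖r‖ ^ 2 ≤ 0 := by simpa [hrW r hr₀] using hB r
  have : r = 0 := by simpa using nonpos_of_mul_nonpos_right this hα
  exact sub_eq_zero.mp this

end LocalizedMethod

theorem existsUnique_isLocalizedSolution {𝕜 E : Type*} [RCLike 𝕜] [NormedAddCommGroup E]
    [InnerProductSpace 𝕜 E] [CompleteSpace E] (B : E →L[𝕜] E →L⋆[𝕜] 𝕜) {α : ℝ} (hα : 0 < α)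
    (hB : ∀ v, α * ‖v‖ ^ 2 ≤ ‖B v v‖) {π : E →L[𝕜] E} (hπ : IsIdempotentElem π)
    (Km : E →L[𝕜] E) (hKm₀ : ∀ v ∈ Set.range π, π (Km v) = 0) (F : E →L⋆[𝕜] 𝕜) :
    ∃! uHm : E, IsLocalizedSolution B π Km F uHm := by
  have : CompleteSpace π.range :=
    (ContinuousLinearMap.IsIdempotentElem.isClosed_range hπ).completeSpace_coe
  set T : π.range →L[𝕜] E := (ContinuousLinearMap.id 𝕜 E + Km).comp π.range.subtypeL
  have hπT : ∀ x : π.range, π (T x) = x := fun x => by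
    obtain ⟨w, hw⟩ := x.2
    have hx : π x = x := by rw [← hw]; exact congr($hπ w)
    simp [T, hx, hKm₀ x ⟨w, hw⟩]
  -- The `+ 1` keeps the coercivity constant positive when `π = 0`.
  have hT : ∀ x : π.range, ‖x‖ ≤ (‖π‖ + 1) * ‖T x‖ := fun x =>
    calc ‖x‖ = ‖π (T x)‖ := by rw [hπT, Submodule.coe_norm]
      _ ≤ ‖π‖ * ‖T x‖ := π.le_opNorm _
      _ ≤ (‖π‖ + 1) * ‖T x‖ := by gcongr; linarith
  obtain ⟨x, hx, hx_unique⟩ := (B.bilinearComp T T).existsUnique_apply_eq_of_coercive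
    (by positivity) (B.coercive_bilinearComp T hα.le hB hT) (F.comp T)
  refine ⟨x, ⟨x.2, fun v hv => congr($hx ⟨v, hv⟩)⟩, fun y ⟨hy, hy_sol⟩ => ?_⟩
  exact congr_arg Subtype.val (hx_unique ⟨y, hy⟩ (ContinuousLinearMap.ext fun v => hy_sol v v.2))

theorem localized_method_error_estimate_general
    {V : Type*} [NormedAddCommGroup V] [InnerProductSpace ℂ V] [CompleteSpace V]
    (B : V → V → ℂ) (C_B α : ℝ) (hC_B : 0 < C_B) (hα : 0 < α)
    (hadd₁ : ∀ u v w : V, B (u + v) w = B u w + B v w)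
    (hsmul₁ : ∀ (c : ℂ) (u w : V), B (c • u) w = c * B u w)
    (hadd₂ : ∀ u v w : V, B u (v + w) = B u v + B u w)
    (hsmul₂ : ∀ (c : ℂ) (u w : V), B u (c • w) = (starRingEnd ℂ) c * B u w)
    (hbound : ∀ u v : V, ‖B u v‖ ≤ C_B * ‖u‖ * ‖v‖)
    (hcoer : ∀ v : V, α * ‖v‖ ^ 2 ≤ ‖B v v‖)
    (π : V →L[ℂ] V) (hπ : ∀ v : V, π (π v) = π v)
    (K : V → V)
    (hK₀ : ∀ vH ∈ Set.range π, π (K vH) = 0)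
    (hK : ∀ vH ∈ Set.range π, ∀ w : V, π w = 0 → B (K vH) w = -(B vH w))
    (F : V →L⋆[ℂ] ℂ)
    (u : V) (hu : ∀ v : V, B u v = F v)
    (gF : V) (hgF₀ : π gF = 0) (hgF : ∀ w : V, π w = 0 → B gF w = F w)
    (Km : V →L[ℂ] V) (hKm₀ : ∀ vH ∈ Set.range π, π (Km vH) = 0)
    (ε : ℝ)
    (happrox : ∀ vH ∈ Set.range π, ‖K vH - Km vH‖ ≤ ε * ‖vH‖) :
    (∃! uHm : V, uHm ∈ Set.range π ∧
        ∀ v ∈ Set.range π, B (uHm + Km uHm) (v + Km v) = F (v + Km v)) ∧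
      (∀ uHm : V,
        (uHm ∈ Set.range π ∧
          ∀ v ∈ Set.range π, B (uHm + Km uHm) (v + Km v) = F (v + Km v)) →
        ‖u - (uHm + Km uHm)‖ ≤ (C_B / α) * (‖gF‖ + ε * ‖π u‖)) := by
  let Bc : V →L[ℂ] V →L⋆[ℂ] ℂ :=
    (LinearMap.mk₂'ₛₗ _ _ B hadd₁ hsmul₁ hadd₂ hsmul₂).mkContinuous₂ C_B hbound
  have hπ' : IsIdempotentElem π := ContinuousLinearMap.ext hπ
  refine ⟨existsUnique_isLocalizedSolution Bc hα hcoer hπ' Km hKm₀ F, fun uHm huHm => ?_⟩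
  have hπu : π u ∈ Set.range π := ⟨u, rfl⟩
  have hdefect : u - (π u + Km (π u)) = gF + (K (π u) - Km (π u)) := by
    nth_rewrite 1 [eq_add_corrector_add_green Bc hα hcoer hπ' hK₀ hK hu hgF₀ hgF]
    abel
  calc ‖u - (uHm + Km uHm)‖ ≤ C_B / α * ‖u - (π u + Km (π u))‖ :=
        IsLocalizedSolution.norm_sub_le (B := Bc) hC_B.le hα hbound hcoer hu huHm hπu
    _ ≤ C_B / α * (‖gF‖ + ε * ‖π u‖) := by
        rw [hdefect]
        gcongr
        exact (norm_add_le _ _).trans (by gcongr; exact happrox _ hπu)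

/-- **Error estimate for the localized multiscale method (abstract form of
Theorem 3.3).** Let `K` be the ideal corrector and `K_m` a continuous linear
map on `V` mapping `V_H = range π` into `W = ker π` with
`‖K v_H - K_m v_H‖ ≤ ε ‖v_H‖` on `V_H`. Then the localized homogenized
equation has a unique solution `u_{H,m} ∈ V_H`, and it satisfies
`‖u - (I + K_m) u_{H,m}‖ ≤ (C_B / α) (‖gF‖ + ε ‖π u‖)`. -/
theorem localized_method_error_estimate
    {V : Type*} [NormedAddCommGroup V] [InnerProductSpace ℂ V] [CompleteSpace V]
    (B : V → V → ℂ) (C_B α : ℝ) (hC_B : 0 < C_B) (hα : 0 < α)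
    (hadd₁ : ∀ u v w : V, B (u + v) w = B u w + B v w)
    (hsmul₁ : ∀ (c : ℂ) (u w : V), B (c • u) w = c * B u w)
    (hadd₂ : ∀ u v w : V, B u (v + w) = B u v + B u w)
    (hsmul₂ : ∀ (c : ℂ) (u w : V), B u (c • w) = (starRingEnd ℂ) c * B u w)
    (hbound : ∀ u v : V, ‖B u v‖ ≤ C_B * ‖u‖ * ‖v‖)
    (hcoer : ∀ v : V, α * ‖v‖ ^ 2 ≤ ‖B v v‖)
    (π : V →L[ℂ] V) (hπ : ∀ v : V, π (π v) = π v)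
    (K : V → V)
    (hK₀ : ∀ vH ∈ Set.range π, π (K vH) = 0)
    (hK : ∀ vH ∈ Set.range π, ∀ w : V, π w = 0 → B (K vH) w = -(B vH w))
    (F : V →L⋆[ℂ] ℂ)
    (u : V) (hu : ∀ v : V, B u v = F v)
    (gF : V) (hgF₀ : π gF = 0) (hgF : ∀ w : V, π w = 0 → B gF w = F w)
    (Km : V →L[ℂ] V) (hKm₀ : ∀ vH ∈ Set.range π, π (Km vH) = 0)
    (ε : ℝ) (hε : 0 ≤ ε)
    (happrox : ∀ vH ∈ Set.range π, ‖K vH - Km vH‖ ≤ ε * ‖vH‖) :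
    (∃! uHm : V, uHm ∈ Set.range π ∧
        ∀ v ∈ Set.range π, B (uHm + Km uHm) (v + Km v) = F (v + Km v)) ∧
      (∀ uHm : V,
        (uHm ∈ Set.range π ∧
          ∀ v ∈ Set.range π, B (uHm + Km uHm) (v + Km v) = F (v + Km v)) →
        ‖u - (uHm + Km uHm)‖ ≤ (C_B / α) * (‖gF‖ + ε * ‖π u‖)) :=
  localized_method_error_estimate_general B C_B α hC_B hα hadd₁ hsmul₁ hadd₂ hsmul₂ hbound hcoer π
    hπ K hK₀ hK F u hu gF hgF₀ hgF Km hKm₀ ε happrox
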